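/- The linearization of the system at the fixed point K₊ = (1,0) has eigenvalues 3(2-γ) and √6(√6-λ). In particular K₊ is an unstable node (both eigenvalues positive) when 0 ≤ λ < √6 and γ ∈ (0,2), and a saddle when λ > √6. -/

import Mathlib

/-- The `Σ`-component of the vector field. -/
noncomputable def fS (lam gam s w : ℝ) : ℝ :=
  -(2 - (-1 + 3 * s ^ 2 + 3 / 2 * gam * w)) * s + Real.sqrt (3 / 2) * lam * (1 - s ^ 2 - w)

/-- The `Ω`-component of the vector field. -/
noncomputable def fO (gam s w : ℝ) : ℝ :=
  (2 * (1 + (-1 + 3 * s ^ 2 + 3 / 2 * gam * w)) - 3 * gam) * w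

/-- The Jacobian matrix of the vector field at `(s,w)`. -/
noncomputable def Jac (lam gam s w : ℝ) : Matrix (Fin 2) (Fin 2) ℝ :=
  !![deriv (fun x => fS lam gam x w) s, deriv (fun y => fS lam gam s y) w;
     deriv (fun x => fO gam x w) s, deriv (fun y => fO gam s y) w]

/-! At `K₊ = (1,0)` the Jacobian is upper triangular, because `Ω' = 0` along the whole line
`Ω = 0`; its eigenvalues are therefore its diagonal entries `6 - √6 λ` and `6 - 3γ`. -/

theorem Matrix.det_fin_two_upper_sub_smul_one_eq_zero_iff {R : Type*} [CommRing R]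
    [NoZeroDivisors R] (a b d μ : R) :
    (!![a, b; 0, d] - μ • (1 : Matrix (Fin 2) (Fin 2) R)).det = 0 ↔ μ = a ∨ μ = d := by
  have hdet : (!![a, b; 0, d] - μ • (1 : Matrix (Fin 2) (Fin 2) R)).det = (a - μ) * (d - μ) := by
    simp [Matrix.det_fin_two]
  rw [hdet, mul_eq_zero, sub_eq_zero, sub_eq_zero, eq_comm (a := a), eq_comm (a := d)]

theorem two_mul_sqrt_three_halves : 2 * Real.sqrt (3 / 2) = Real.sqrt 6 := by
  rw [show (6 : ℝ) = 2 ^ 2 * (3 / 2) by norm_num, Real.sqrt_mul (by positivity),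
    Real.sqrt_sq (by norm_num)]

theorem deriv_fS_fst (lam gam s w : ℝ) :
    deriv (fun x => fS lam gam x w) s
      = -3 + 9 * s ^ 2 + 3 / 2 * gam * w - 2 * Real.sqrt (3 / 2) * lam * s := by
  simp (disch := fun_prop) [fS]
  ring

theorem deriv_fS_snd (lam gam s w : ℝ) :
    deriv (fun y => fS lam gam s y) w = 3 / 2 * gam * s - Real.sqrt (3 / 2) * lam := by
  simp (disch := fun_prop) [fS]
  ring

theorem deriv_fO_fst (gam s w : ℝ) : deriv (fun x => fO gam x w) s = 12 * s * w := by
  simp (disch := fun_prop) [fO, -mul_eq_mul_right_iff]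
  ring

theorem deriv_fO_snd (gam s w : ℝ) :
    deriv (fun y => fO gam s y) w = 6 * s ^ 2 + 6 * gam * w - 3 * gam := by
  simp (disch := fun_prop) [fO]
  ring

theorem Jac_eq (lam gam s w : ℝ) :
    Jac lam gam s w =
      !![-3 + 9 * s ^ 2 + 3 / 2 * gam * w - 2 * Real.sqrt (3 / 2) * lam * s,
          3 / 2 * gam * s - Real.sqrt (3 / 2) * lam;
         12 * s * w, 6 * s ^ 2 + 6 * gam * w - 3 * gam] := by
  rw [Jac, deriv_fS_fst, deriv_fS_snd, deriv_fO_fst, deriv_fO_snd]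

theorem Jac_one_zero (lam gam : ℝ) :
    Jac lam gam 1 0 =
      !![Real.sqrt 6 * (Real.sqrt 6 - lam), 3 / 2 * gam - Real.sqrt (3 / 2) * lam;
         0, 3 * (2 - gam)] := by
  have h6 : Real.sqrt 6 * (Real.sqrt 6 - lam) = 6 - 2 * Real.sqrt (3 / 2) * lam := by
    rw [mul_sub, Real.mul_self_sqrt (by norm_num), ← two_mul_sqrt_three_halves]
  rw [Jac_eq, h6]
  norm_num
  ring

theorem stmt_14_general (lam gam : ℝ) (hg2 : gam < 2) :
    (∀ μ : ℝ, (Jac lam gam 1 0 - μ • (1 : Matrix (Fin 2) (Fin 2) ℝ)).det = 0 ↔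
      μ = 3 * (2 - gam) ∨ μ = Real.sqrt 6 * (Real.sqrt 6 - lam)) ∧
    (lam < Real.sqrt 6 → 0 < 3 * (2 - gam) ∧ 0 < Real.sqrt 6 * (Real.sqrt 6 - lam)) ∧
    (Real.sqrt 6 < lam → 0 < 3 * (2 - gam) ∧ Real.sqrt 6 * (Real.sqrt 6 - lam) < 0) := by
  have h6 : 0 < Real.sqrt 6 := by positivity
  have hγ : 0 < 3 * (2 - gam) := by linarith
  refine ⟨fun μ => ?_, fun h => ⟨hγ, mul_pos h6 (sub_pos.2 h)⟩,
    fun h => ⟨hγ, mul_neg_of_pos_of_neg h6 (sub_neg.2 h)⟩⟩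
  rw [Jac_one_zero, Matrix.det_fin_two_upper_sub_smul_one_eq_zero_iff, or_comm]

/-- The linearization at `K₊ = (1,0)` has eigenvalues `3(2-γ)` and `√6(√6-λ)`; `K₊` is an
unstable node (both positive) when `0 ≤ λ < √6`, `γ ∈ (0,2)`, and a saddle when `λ > √6`. -/
theorem stmt_14 (lam gam : ℝ) (hl : 0 ≤ lam) (hg : 0 < gam) (hg2 : gam < 2) :
    (∀ μ : ℝ, (Jac lam gam 1 0 - μ • (1 : Matrix (Fin 2) (Fin 2) ℝ)).det = 0 ↔
      μ = 3 * (2 - gam) ∨ μ = Real.sqrt 6 * (Real.sqrt 6 - lam)) ∧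
    (lam < Real.sqrt 6 → 0 < 3 * (2 - gam) ∧ 0 < Real.sqrt 6 * (Real.sqrt 6 - lam)) ∧
    (Real.sqrt 6 < lam → 0 < 3 * (2 - gam) ∧ Real.sqrt 6 * (Real.sqrt 6 - lam) < 0) :=
  stmt_14_general lam gam hg2
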